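/- Let R be a commutative ring, V a set of valuations on R, and v a valuation on R with v(f) ≥ 0 for f ∈ R. Suppose the valuative filtration 𝔞_λ(v) := {f : v(f) ≥ λ} is saturated with respect to V, i.e., 𝔞_λ(v) ∩ 𝔪 = {f ∈ 𝔪 : w(f) ≥ λ·w(𝔞_•(v)) ∀ w ∈ V} for all λ > 0. Then for every f ∈ 𝔪, v(f) = inf_{w ∈ V} w(f)/w(𝔞_•(v)) (with w(𝔞_•(v)) = inf_m w(𝔞_m(v))/m assumed in (0,∞) for all w ∈ V). -/

import Mathlib

open scoped ENNReal

/-- The valuative filtration `𝔞_λ(v) = {f | v f ≥ λ}`. -/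
def valFiltr {R : Type*} [CommRing R] (v : R → ℝ≥0∞) (lam : ℝ) : Set R :=
  {f : R | ENNReal.ofReal lam ≤ v f}

/-- `w(𝔞_•(v)) = inf_{m ≥ 1} w(𝔞_m(v))/m`. -/
noncomputable def valFiltrVal {R : Type*} [CommRing R] (v : R → ℝ≥0∞) (w : R → ℝ≥0∞) : ℝ≥0∞ :=
  ⨅ (p : ℕ) (_ : 1 ≤ p), sInf (w '' valFiltr v (p : ℝ)) / p

namespace ENNReal

theorem le_of_forall_pos_ofReal_le_imp {a b : ℝ≥0∞}
    (h : ∀ r : ℝ, 0 < r → ENNReal.ofReal r ≤ a → ENNReal.ofReal r ≤ b) : a ≤ b :=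
  le_of_forall_pos_nnreal_lt fun r hr hra => by
    simpa using h r (by exact_mod_cast hr) (by simpa using hra.le)

theorem eq_of_forall_pos_ofReal_le_iff {a b : ℝ≥0∞}
    (h : ∀ r : ℝ, 0 < r → (ENNReal.ofReal r ≤ a ↔ ENNReal.ofReal r ≤ b)) : a = b :=
  le_antisymm (le_of_forall_pos_ofReal_le_imp fun r hr => (h r hr).mp)
    (le_of_forall_pos_ofReal_le_imp fun r hr => (h r hr).mpr)

theorem le_iInf_div_iff_forall_mul_le {ι : Type*} {x : ℝ≥0∞} {a c : ι → ℝ≥0∞}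
    (hc0 : ∀ i, c i ≠ 0) (hctop : ∀ i, c i ≠ ⊤) :
    x ≤ ⨅ i, a i / c i ↔ ∀ i, x * c i ≤ a i := by
  simp only [le_iInf_iff, ENNReal.le_div_iff_mul_le (Or.inl (hc0 _)) (Or.inl (hctop _))]

end ENNReal

theorem stmt16_general {R : Type*} [CommRing R] {ι : Type*}
    (v : R → ℝ≥0∞) (w : ι → R → ℝ≥0∞) (m : Ideal R)
    (hval : ∀ i, 0 < valFiltrVal v (w i) ∧ valFiltrVal v (w i) ≠ ⊤)
    (hsat : ∀ lam : ℝ, 0 < lam →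
      {f : R | f ∈ m ∧ f ∈ valFiltr v lam} =
      {f : R | f ∈ m ∧ ∀ i : ι, ENNReal.ofReal lam * valFiltrVal v (w i) ≤ w i f}) :
    ∀ f ∈ m, v f = ⨅ i : ι, w i f / valFiltrVal v (w i) := by
  intro f hf
  -- Saturation, read at `f`, says that both sides have the same positive real lower bounds.
  refine ENNReal.eq_of_forall_pos_ofReal_le_iff fun lam hlam => ?_
  rw [ENNReal.le_iInf_div_iff_forall_mul_le (fun i => (hval i).1.ne') fun i => (hval i).2]
  simpa [valFiltr, hf] using Set.ext_iff.mp (hsat lam hlam) f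

/-- if the valuative filtration of `v` is saturated with respect to the
family `V = {w i}`, then on `𝔪` the valuation `v` is computed by
`v f = inf_{w ∈ V} w(f)/w(𝔞_•(v))`, provided each `w(𝔞_•(v)) ∈ (0, ∞)`. -/
theorem stmt16 {R : Type*} [CommRing R] {ι : Type*} [Nonempty ι]
    (v : R → ℝ≥0∞) (w : ι → R → ℝ≥0∞) (m : Ideal R)
    (hv0 : v 0 = ⊤)
    (hvmul : ∀ f g : R, v (f * g) = v f + v g)
    (hvadd : ∀ f g : R, min (v f) (v g) ≤ v (f + g))
    (hw0 : ∀ i, w i 0 = ⊤)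
    (hwmul : ∀ i, ∀ f g : R, w i (f * g) = w i f + w i g)
    (hwadd : ∀ i, ∀ f g : R, min (w i f) (w i g) ≤ w i (f + g))
    (hval : ∀ i, 0 < valFiltrVal v (w i) ∧ valFiltrVal v (w i) ≠ ⊤)
    (hsat : ∀ lam : ℝ, 0 < lam →
      {f : R | f ∈ m ∧ f ∈ valFiltr v lam} =
      {f : R | f ∈ m ∧ ∀ i : ι, ENNReal.ofReal lam * valFiltrVal v (w i) ≤ w i f}) :
    ∀ f ∈ m, v f = ⨅ i : ι, w i f / valFiltrVal v (w i) :=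
  stmt16_general v w m hval hsat
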